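/- arXiv:cond-mat/0205548 — 4 statements merged into one kernel-verified Lean document; each statement's English description precedes it below -/
import Mathlib

section
/- For every ion configuration C = {n_{x,σ}} one has the identity H_i^0(C) = Σ_{⟨x,y⟩} φ(Q_x, Q_y) − (I·r/4)·|Λ|, where the sum runs over the edges of G, Q_x = n_x − r/2, and φ(a,b) = (W/4)(a+b)² − (W/4 − I/z)(a² + b²). -/
open Finset

/-- Occupation number (0 or 1) attached to a Boolean occupancy variable. -/
noncomputable def occ (b : Bool) : ℝ := if b then 1 else 0

/-- Total number of ions at site `x` (as a real number): `n_x = Σ_σ n_{x,σ}`. -/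
noncomputable def nsite {V : Type*} {r : ℕ} (C : V → Fin r → Bool) (x : V) : ℝ :=
  ∑ σ : Fin r, occ (C x σ)

/-- Total number of ions at site `x` (as a natural number). -/
def nnat {V : Type*} {r : ℕ} (C : V → Fin r → Bool) (x : V) : ℕ :=
  ∑ σ : Fin r, (if C x σ then 1 else 0)

/-- The classical Hamiltonian
`H_i^0(C) = 2I Σ_x Σ_{σ'<σ''} (n_{x,σ'} - 1/2)(n_{x,σ''} - 1/2)
          + (W/2) Σ_{⟨x,y⟩} (n_x - r/2)(n_y - r/2)`,
where the sum over edges `⟨x,y⟩` (each edge counted once) is written as half the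
symmetric double sum over ordered adjacent pairs. -/
noncomputable def H0 {V : Type*} [Fintype V] (G : SimpleGraph V) [DecidableRel G.Adj]
    (r : ℕ) (I W : ℝ) (C : V → Fin r → Bool) : ℝ :=
  2 * I * ∑ x : V, ∑ p ∈ Finset.univ.filter (fun p : Fin r × Fin r => p.1 < p.2),
      (occ (C x p.1) - 1 / 2) * (occ (C x p.2) - 1 / 2)
  + W / 2 * ((∑ x : V, ∑ y : V,
      (if G.Adj x y then (nsite C x - r / 2) * (nsite C y - r / 2) else 0)) / 2)

/-- The nearest-neighbour bond potential
`φ(a,b) = (W/4)(a+b)² − (W/4 − I/z)(a² + b²)`. -/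
noncomputable def phi (z : ℕ) (I W : ℝ) (a b : ℝ) : ℝ :=
  W / 4 * (a + b) ^ 2 - (W / 4 - I / z) * (a ^ 2 + b ^ 2)

/-! Write `Q_x = Σ_σ (n_{x,σ} − 1/2)`. Since every `(n_{x,σ} − 1/2)² = 1/4`, expanding `Q_x²` turns
the on-site pair term into `(Q_x² − r/4)/2`. On a `z`-regular graph every vertex lies on exactly `z`
edges, so `Σ_x Q_x² = (1/z) Σ_{⟨x,y⟩} (Q_x² + Q_y²)`, which spreads the on-site energy over the
bonds and yields `φ`. -/

lemma sq_sum_eq_sum_sq_add_two_mul_sum_lt {ι R : Type*} [Fintype ι] [LinearOrder ι] [CommRing R]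
    (f : ι → R) :
    (∑ i, f i) ^ 2 = ∑ i, f i ^ 2
      + 2 * ∑ p ∈ univ.filter (fun p : ι × ι => p.1 < p.2), f p.1 * f p.2 := by
  have hswap : ∑ p ∈ univ.filter (fun p : ι × ι => p.2 < p.1), f p.1 * f p.2
      = ∑ p ∈ univ.filter (fun p : ι × ι => p.1 < p.2), f p.1 * f p.2 :=
    sum_nbij' Prod.swap Prod.swap (by simp) (by simp) (by simp) (by simp)
      (fun _ _ => mul_comm _ _)
  have hdiag : ∑ p ∈ univ.filter (fun p : ι × ι => p.1 = p.2), f p.1 * f p.2 = ∑ i, f i ^ 2 :=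
    sum_nbij' Prod.fst (fun i => (i, i)) (by simp) (by simp)
      (fun p hp => Prod.ext rfl (by simpa using hp)) (by simp)
      (fun p hp => by rw [(mem_filter.1 hp).2, sq])
  calc (∑ i, f i) ^ 2 = ∑ p : ι × ι, f p.1 * f p.2 := by
        rw [sq, Fintype.sum_mul_sum, Fintype.sum_prod_type]
    _ = ∑ p ∈ univ.filter (fun p : ι × ι => p.1 < p.2), f p.1 * f p.2
        + ∑ p ∈ univ.filter (fun p : ι × ι => p.1 = p.2), f p.1 * f p.2
        + ∑ p ∈ univ.filter (fun p : ι × ι => p.2 < p.1), f p.1 * f p.2 := by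
        simp only [sum_filter, ← sum_add_distrib]
        refine sum_congr rfl fun p _ => ?_
        rcases lt_trichotomy p.1 p.2 with h | h | h
        · simp [h, h.ne, h.not_gt]
        · simp [h]
        · simp [h, h.ne', h.not_gt]
    _ = _ := by rw [hswap, hdiag]; ring

lemma occ_sub_half_sq (b : Bool) : (occ b - 1 / 2) ^ 2 = 1 / 4 := by
  cases b <;> norm_num [occ]

lemma sum_lt_occ_sub_half_mul {V : Type*} {r : ℕ} (C : V → Fin r → Bool) (x : V) :
    ∑ p ∈ univ.filter (fun p : Fin r × Fin r => p.1 < p.2),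
        (occ (C x p.1) - 1 / 2) * (occ (C x p.2) - 1 / 2)
      = ((nsite C x - r / 2) ^ 2 - r / 4) / 2 := by
  have hsum : ∑ σ, (occ (C x σ) - 1 / 2) = nsite C x - r / 2 := by
    simp [sum_sub_distrib, nsite, div_eq_mul_inv]
  have hexpand := sq_sum_eq_sum_sq_add_two_mul_sum_lt (fun σ => occ (C x σ) - 1 / 2)
  simp only [hsum, occ_sub_half_sq, sum_const, card_univ, Fintype.card_fin, nsmul_eq_mul] at hexpand
  linarith

namespace SimpleGraph.IsRegularOfDegree

variable {V R : Type*} [Fintype V] {G : SimpleGraph V} [DecidableRel G.Adj] [NonAssocSemiring R]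
  {d : ℕ}

lemma sum_ite_adj (h : G.IsRegularOfDegree d) (x : V) (c : R) :
    ∑ y, (if G.Adj x y then c else 0) = d * c := by
  rw [← sum_filter, sum_const, ← neighborFinset_eq_filter, card_neighborFinset_eq_degree, h x,
    nsmul_eq_mul]

lemma sum_sum_ite_adj_left (h : G.IsRegularOfDegree d) (f : V → R) :
    ∑ x, ∑ y, (if G.Adj x y then f x else 0) = d * ∑ x, f x := by
  simp_rw [h.sum_ite_adj, mul_sum]

lemma sum_sum_ite_adj_right (h : G.IsRegularOfDegree d) (f : V → R) :
    ∑ x, ∑ y, (if G.Adj x y then f y else 0) = d * ∑ x, f x := by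
  rw [sum_comm]
  simp_rw [G.adj_comm]
  exact h.sum_sum_ite_adj_left f

end SimpleGraph.IsRegularOfDegree

lemma phi_eq_mul_add_sq_add_sq (z : ℕ) (I W a b : ℝ) :
    phi z I W a b = W / 2 * (a * b) + I / z * (a ^ 2 + b ^ 2) := by
  unfold phi; ring

lemma sum_sum_ite_adj_phi {V : Type*} [Fintype V] {G : SimpleGraph V} [DecidableRel G.Adj]
    {z : ℕ} (hreg : G.IsRegularOfDegree z) (hz : z ≠ 0) (I W : ℝ) (Q : V → ℝ) :
    ∑ x, ∑ y, (if G.Adj x y then phi z I W (Q x) (Q y) else 0)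
      = W / 2 * ∑ x, ∑ y, (if G.Adj x y then Q x * Q y else 0) + 2 * I * ∑ x, Q x ^ 2 := by
  have hsplit : ∀ x y, (if G.Adj x y then phi z I W (Q x) (Q y) else 0)
      = W / 2 * (if G.Adj x y then Q x * Q y else 0)
        + I / z * ((if G.Adj x y then Q x ^ 2 else 0) + (if G.Adj x y then Q y ^ 2 else 0)) := by
    intro x y
    split_ifs <;> simp [phi_eq_mul_add_sq_add_sq]
  simp_rw [hsplit, sum_add_distrib, ← mul_sum, sum_add_distrib,
    hreg.sum_sum_ite_adj_left, hreg.sum_sum_ite_adj_right]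
  field_simp
  ring

theorem statement0_general
    {V : Type*} [Fintype V]
    (G : SimpleGraph V) [DecidableRel G.Adj]
    (z r : ℕ) (hz : 2 ≤ z)
    (hreg : G.IsRegularOfDegree z)
    (I W : ℝ) (C : V → Fin r → Bool) :
    H0 G r I W C =
      (∑ x : V, ∑ y : V,
        (if G.Adj x y then phi z I W (nsite C x - r / 2) (nsite C y - r / 2) else 0)) / 2
      - I * r / 4 * (Fintype.card V) := by
  rw [sum_sum_ite_adj_phi hreg (by omega), H0]
  simp_rw [sum_lt_occ_sub_half_mul, ← sum_div, sum_sub_distrib, sum_const, card_univ, nsmul_eq_mul]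
  ring

/-- For every ion configuration `C`,
`H_i^0(C) = Σ_{⟨x,y⟩} φ(Q_x, Q_y) − (I·r/4)·|Λ|`, where `Q_x = n_x − r/2`. -/
theorem statement0
    {V : Type*} [Fintype V] [DecidableEq V]
    (G : SimpleGraph V) [DecidableRel G.Adj]
    (z r : ℕ) (hz : 2 ≤ z) (hr : 2 ≤ r)
    (hreg : G.IsRegularOfDegree z) (hconn : G.Connected)
    (Λe Λo : Finset V)
    (hcover : ∀ v : V, v ∈ Λe ∨ v ∈ Λo) (hdisj : Disjoint Λe Λo)
    (hbip : ∀ x y : V, G.Adj x y → (x ∈ Λe ∧ y ∈ Λo) ∨ (x ∈ Λo ∧ y ∈ Λe))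
    (I W : ℝ) (C : V → Fin r → Bool) :
    H0 G r I W C =
      (∑ x : V, ∑ y : V,
        (if G.Adj x y then phi z I W (nsite C x - r / 2) (nsite C y - r / 2) else 0)) / 2
      - I * r / 4 * (Fintype.card V) :=
  statement0_general G z r hz hreg I W C
end

section
/- (Theorem 2(i), matrix form) Assume t ≠ 0, U ≠ 0, W > 0, and 4I < zW. Then the energy functional E(C) = −(1/2) Σ_{σ=1}^r Tr √((T + U·S_σ(C))²) + H_i^0(C) attains its minimum over all ion configurations at exactly two configurations: those in which every site of one sublattice (Λᵉ or Λᵒ) is occupied by all r ions (n_{x,σ} = 1 for all σ) while the complementary sublattice is empty. -/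
open Finset

/-- Hopping matrix: `T_{xy} = t` if `{x,y}` is an edge of `G`, and `0` otherwise. -/
noncomputable def hopMat {V : Type*} (G : SimpleGraph V) [DecidableRel G.Adj]
    (t : ℝ) : Matrix V V ℝ :=
  Matrix.of fun x y => if G.Adj x y then t else 0

/-- Diagonal matrix `S_σ(C)` with entries `(S_σ)_{xx} = 2 n_{x,σ} − 1`. -/
noncomputable def ionMat {V : Type*} [DecidableEq V] {r : ℕ}
    (C : V → Fin r → Bool) (σ : Fin r) : Matrix V V ℝ :=
  Matrix.diagonal fun x => 2 * occ (C x σ) - 1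

/-- The positive semidefinite square root, as `Matrix.PosSemidef.sqrt` was defined in the
older Mathlib (that declaration has since been removed). -/
noncomputable def psdSqrt {N : Type*} [Fintype N] [DecidableEq N] {A : Matrix N N ℝ}
    (hA : A.PosSemidef) : Matrix N N ℝ :=
  (hA.1.eigenvectorUnitary : Matrix N N ℝ) *
    Matrix.diagonal ((↑) ∘ (fun x : ℝ => √x) ∘ hA.1.eigenvalues) *
    (star hA.1.eigenvectorUnitary : Matrix N N ℝ)

/-- `Tr √(A²)`: the trace of the positive semidefinite square root of `A²`
(defined whenever `A²` is positive semidefinite, e.g. for symmetric `A`). -/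
noncomputable def trAbs {N : Type*} [Fintype N] [DecidableEq N] (A : Matrix N N ℝ) : ℝ :=
  letI := Classical.dec ((A * A).PosSemidef)
  if h : (A * A).PosSemidef then psdSqrt h |>.trace else 0

/-- The ground-state energy functional at the hole–particle symmetry point:
`E(C) = −(1/2) Σ_σ Tr √((T + U·S_σ(C))²) + H_i^0(C)`. -/
noncomputable def Efun {V : Type*} [Fintype V] [DecidableEq V] (G : SimpleGraph V)
    [DecidableRel G.Adj] (r : ℕ) (t U I W : ℝ) (C : V → Fin r → Bool) : ℝ :=
  -(1 / 2) * ∑ σ : Fin r, trAbs (hopMat G t + U • ionMat C σ) + H0 G r I W C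

/-!
The energy splits as `E(C) = -(1/2) Σ_σ Tr|T + U S_σ(C)| + H₀(C)`, and both parts are minimised by
the two checkerboards.

Electronic part. Let `ε = ±1` be the staggered sign of the bipartition. Conjugation by `diag ε`
reverses the sign of `T` and fixes every `S_σ`, so `A = T + U S` and `B = -T + U S` have the same
trace norm, while `A² + B² = 2 (T² + U²) = 2 (T + U ε)²` because `T` anticommutes with `diag ε`.
Midpoint concavity of `X ↦ Tr √X` then gives `Tr|T + U S| ≤ Tr|T + U ε|`, with equality at `S = ±ε`.

Classical part. In terms of the staggered charge `u_x = ε_x (n_x - r/2)`, which satisfies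
`|u_x| ≤ r/2`, one has `H₀ = (I - zW/4) Σ_x u_x² + (W/4) ⟨u, L u⟩ - I r |Λ| / 4` with `L` the
graph Laplacian. As `4I < zW` and `W > 0`, this is minimal iff `|u_x| = r/2` everywhere and
`⟨u, L u⟩ = 0`, i.e. (`G` being connected) iff `u ≡ ±r/2`: exactly the two checkerboards.
-/

namespace FalicovKimball

open Matrix
open scoped MatrixOrder

lemma sqrt_add_sqrt_le {a b : ℝ} (ha : 0 ≤ a) (hb : 0 ≤ b) :
    √a + √b ≤ 2 * √((a + b) / 2) := by
  have hsq : (√a + √b) ^ 2 ≤ (2 * √((a + b) / 2)) ^ 2 := by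
    rw [mul_pow, Real.sq_sqrt (by positivity)]
    nlinarith [Real.sq_sqrt ha, Real.sq_sqrt hb, sq_nonneg (√a - √b)]
  exact (pow_le_pow_iff_left₀ (by positivity) (by positivity) two_ne_zero).mp hsq

lemma two_mul_sum_filter_lt {ι R : Type*} [Fintype ι] [LinearOrder ι] [CommRing R]
    (f : ι → R) :
    2 * ∑ p ∈ univ.filter (fun p : ι × ι => p.1 < p.2), f p.1 * f p.2
      = (∑ i, f i) ^ 2 - ∑ i, f i ^ 2 := by
  have hsplit (i j : ι) : f i * f j = (if i < j then f i * f j else 0)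
      + (if j < i then f j * f i else 0) + (if i = j then f i ^ 2 else 0) := by
    rcases lt_trichotomy i j with h | rfl | h
    · simp [h, h.not_gt, h.ne]
    · simp [sq]
    · simp [h, h.not_gt, h.ne', mul_comm]
  have hlt : ∑ p ∈ univ.filter (fun p : ι × ι => p.1 < p.2), f p.1 * f p.2
      = ∑ i, ∑ j, if i < j then f i * f j else 0 := by
    rw [Finset.sum_filter, Fintype.sum_prod_type]
  rw [sq, Finset.sum_mul_sum,
    Finset.sum_congr rfl fun i _ => Finset.sum_congr rfl fun j _ => hsplit i j]
  simp only [Finset.sum_add_distrib]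
  rw [Finset.sum_comm (f := fun i j => if j < i then f j * f i else 0), hlt]
  simp only [Finset.sum_ite_eq, Finset.mem_univ, if_true]
  ring

theorem setOf_forall_add_le_eq {α β : Type*} [AddCommMonoid β] [PartialOrder β]
    [IsOrderedCancelAddMonoid β] {f g : α → β} {S : Set α} {m n : β} (hS : S.Nonempty)
    (hf : ∀ x, m ≤ f x) (hfS : ∀ x ∈ S, f x = m) (hg : ∀ x, n ≤ g x)
    (hgS : ∀ x, g x ≤ n ↔ x ∈ S) :
    {x | ∀ y, f x + g x ≤ f y + g y} = S := by
  obtain ⟨a, ha⟩ := hS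
  ext x
  refine ⟨fun hx => (hgS x).mp ?_, fun hx y => ?_⟩
  · have := hx a
    rw [hfS a ha, le_antisymm ((hgS a).mpr ha) (hg a)] at this
    exact le_of_add_le_add_left ((add_le_add_left (hf x) _).trans this)
  · rw [hfS x hx, le_antisymm ((hgS x).mpr hx) (hg x)]
    exact add_le_add (hf y) (hg y)

section TraceNorm

variable {N : Type*} [Fintype N] [DecidableEq N]

lemma psdSqrt_eq_sqrt {A : Matrix N N ℝ} (hA : A.PosSemidef) : psdSqrt hA = CFC.sqrt A := by
  have : 0 ≤ A := hA.nonneg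
  rw [CFC.sqrt_eq_real_sqrt A, cfcₙ_eq_cfc, hA.1.cfc_eq]
  rfl

lemma trAbs_eq_trace_sqrt {A : Matrix N N ℝ} (hA : A.IsHermitian) :
    trAbs A = (CFC.sqrt (A * A)).trace := by
  rw [trAbs, dif_pos hA.isSelfAdjoint.mul_self_nonneg.posSemidef, psdSqrt_eq_sqrt]

lemma trAbs_neg (A : Matrix N N ℝ) : trAbs (-A) = trAbs A := by
  unfold trAbs
  rw [neg_mul_neg]

lemma star_mul_mul_mul_star_mul_mul {O : Matrix N N ℝ} (hO : O * star O = 1)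
    (X Y : Matrix N N ℝ) :
    star O * X * O * (star O * Y * O) = star O * (X * Y) * O := by
  calc _ = star O * X * (O * star O) * Y * O := by noncomm_ring
    _ = _ := by rw [hO, mul_one, mul_assoc _ X Y]

lemma sqrt_star_mul_mul {M : Matrix N N ℝ} (hM : 0 ≤ M) {O : Matrix N N ℝ}
    (hO : O * star O = 1) : CFC.sqrt (star O * M * O) = star O * CFC.sqrt M * O := by
  refine CFC.sqrt_unique ?_ (star_left_conjugate_nonneg (CFC.sqrt_nonneg M) O)
  rw [star_mul_mul_mul_star_mul_mul hO, CFC.sqrt_mul_sqrt_self M]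

lemma trAbs_star_mul_mul {A : Matrix N N ℝ} (hA : A.IsHermitian) {O : Matrix N N ℝ}
    (hO : O * star O = 1) : trAbs (star O * A * O) = trAbs A := by
  have hOAO : (star O * A * O).IsHermitian := isHermitian_conjTranspose_mul_mul O hA
  rw [trAbs_eq_trace_sqrt hOAO, trAbs_eq_trace_sqrt hA, star_mul_mul_mul_star_mul_mul hO,
    sqrt_star_mul_mul hA.isSelfAdjoint.mul_self_nonneg hO, trace_mul_cycle, hO, one_mul]

lemma trace_eq_sum_dotProduct {ι : Type*} [Fintype ι]
    (b : OrthonormalBasis ι ℝ (EuclideanSpace ℝ N)) (X : Matrix N N ℝ) :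
    X.trace = ∑ i, ⇑(b i) ⬝ᵥ (X *ᵥ ⇑(b i)) := by
  rw [← X.trace_toLin_eq (PiLp.basisFun 2 ℝ N), ← toLpLin_eq_toLin,
    LinearMap.trace_eq_sum_inner _ b]
  refine Finset.sum_congr rfl fun i _ => ?_
  rw [EuclideanSpace.inner_eq_star_dotProduct, star_trivial, dotProduct_comm]
  rfl

omit [DecidableEq N] in
lemma _root_.OrthonormalBasis.dotProduct_self {ι : Type*} [Fintype ι]
    (b : OrthonormalBasis ι ℝ (EuclideanSpace ℝ N)) (i : ι) : ⇑(b i) ⬝ᵥ ⇑(b i) = 1 := by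
  have := real_inner_self_eq_norm_sq (b i)
  rw [b.orthonormal.1 i, EuclideanSpace.inner_eq_star_dotProduct, star_trivial] at this
  simpa using this

lemma trace_sqrt_eq_sum_sqrt_eigenvalues {M : Matrix N N ℝ} (hM : M.PosSemidef) :
    (CFC.sqrt M).trace = ∑ i, √(hM.1.eigenvalues i) := by
  have : 0 ≤ M := hM.nonneg
  rw [CFC.sqrt_eq_real_sqrt M, cfcₙ_eq_cfc, hM.1.cfc_eq, IsHermitian.cfc,
    Unitary.conjStarAlgAut_apply, trace_mul_cycle, Unitary.coe_star_mul_self, one_mul,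
    trace_diagonal]
  simp

omit [DecidableEq N] in
lemma dotProduct_mulVec_le_sqrt {R : Matrix N N ℝ} (hR : R.IsHermitian) {v : N → ℝ}
    (hv : v ⬝ᵥ v = 1) : v ⬝ᵥ (R *ᵥ v) ≤ √(v ⬝ᵥ ((R * R) *ᵥ v)) := by
  have hRv : v ⬝ᵥ ((R * R) *ᵥ v) = (R *ᵥ v) ⬝ᵥ (R *ᵥ v) := by
    rw [← mulVec_mulVec, dotProduct_mulVec, ← mulVec_transpose,
      ← conjTranspose_eq_transpose_of_trivial, hR.eq, dotProduct_comm]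
  have cauchySchwarz : (v ⬝ᵥ (R *ᵥ v)) ^ 2 ≤ (v ⬝ᵥ v) * ((R *ᵥ v) ⬝ᵥ (R *ᵥ v)) := by
    simpa [dotProduct, sq] using Finset.sum_mul_sq_le_sq_mul_sq Finset.univ v (R *ᵥ v)
  rw [hv, one_mul, ← hRv] at cauchySchwarz
  exact (le_abs_self _).trans (Real.abs_le_sqrt cauchySchwarz)

/-- Test both sides on an orthonormal eigenbasis `vᵢ` of `M`: by Cauchy–Schwarz
`⟨vᵢ, √Mⱼ vᵢ⟩ ≤ √⟨vᵢ, Mⱼ vᵢ⟩`, and `√` is concave on `[0, ∞)`. -/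
theorem trace_sqrt_add_trace_sqrt_le {M₁ M₂ M : Matrix N N ℝ} (h₁ : 0 ≤ M₁)
    (h₂ : 0 ≤ M₂) (h : M₁ + M₂ = (2 : ℝ) • M) :
    (CFC.sqrt M₁).trace + (CFC.sqrt M₂).trace ≤ 2 * (CFC.sqrt M).trace := by
  have hM : M.PosSemidef := by
    rw [show M = (2⁻¹ : ℝ) • (M₁ + M₂) by rw [h, smul_smul]; norm_num]
    exact (h₁.posSemidef.add h₂.posSemidef).smul (by norm_num)
  set v := hM.1.eigenvectorBasis
  have hMv : ∀ i, ⇑(v i) ⬝ᵥ (M *ᵥ ⇑(v i)) = hM.1.eigenvalues i := fun i => by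
    rw [hM.1.mulVec_eigenvectorBasis, dotProduct_smul, v.dotProduct_self, smul_eq_mul, mul_one]
  have hsqrt (P : Matrix N N ℝ) (hP : 0 ≤ P) (i : N) :
      ⇑(v i) ⬝ᵥ (CFC.sqrt P *ᵥ ⇑(v i)) ≤ √(⇑(v i) ⬝ᵥ (P *ᵥ ⇑(v i))) := by
    simpa only [CFC.sqrt_mul_sqrt_self P] using
      dotProduct_mulVec_le_sqrt (CFC.sqrt_nonneg P).posSemidef.1 (v.dotProduct_self i)
  rw [trace_eq_sum_dotProduct v, trace_eq_sum_dotProduct v,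
    trace_sqrt_eq_sum_sqrt_eigenvalues hM, ← Finset.sum_add_distrib, Finset.mul_sum]
  refine Finset.sum_le_sum fun i _ => ?_
  have hsum :
      ⇑(v i) ⬝ᵥ (M₁ *ᵥ ⇑(v i)) + ⇑(v i) ⬝ᵥ (M₂ *ᵥ ⇑(v i)) = 2 * hM.1.eigenvalues i := by
    rw [← dotProduct_add, ← add_mulVec, h, smul_mulVec, dotProduct_smul, hMv, smul_eq_mul]
  calc _ ≤ √(⇑(v i) ⬝ᵥ (M₁ *ᵥ ⇑(v i))) + √(⇑(v i) ⬝ᵥ (M₂ *ᵥ ⇑(v i))) :=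
        add_le_add (hsqrt M₁ h₁ i) (hsqrt M₂ h₂ i)
    _ ≤ 2 * √(hM.1.eigenvalues i) := by
        have := sqrt_add_sqrt_le (by simpa using h₁.posSemidef.dotProduct_mulVec_nonneg (v i))
          (by simpa using h₂.posSemidef.dotProduct_mulVec_nonneg (v i))
        rwa [hsum, mul_div_cancel_left₀ _ two_ne_zero] at this

theorem trAbs_add_trAbs_le {A B C : Matrix N N ℝ} (hA : A.IsHermitian) (hB : B.IsHermitian)
    (hC : C.IsHermitian) (h : A * A + B * B = (2 : ℝ) • (C * C)) :
    trAbs A + trAbs B ≤ 2 * trAbs C := by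
  rw [trAbs_eq_trace_sqrt hA, trAbs_eq_trace_sqrt hB, trAbs_eq_trace_sqrt hC]
  exact trace_sqrt_add_trace_sqrt_le hA.isSelfAdjoint.mul_self_nonneg
    hB.isSelfAdjoint.mul_self_nonneg h

lemma add_smul_mul_self (X D : Matrix N N ℝ) (hD : D * D = 1) (u : ℝ) :
    (X + u • D) * (X + u • D) = X * X + u • (X * D + D * X) + (u * u) • 1 := by
  simp only [add_mul, mul_add, smul_mul_assoc, mul_smul_comm, smul_smul, smul_add, hD]
  abel

lemma diagonal_mul_self_eq_one {ε : N → ℝ} (hε : ∀ x, ε x * ε x = 1) :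
    diagonal ε * diagonal ε = 1 := by
  rw [diagonal_mul_diagonal, funext hε, diagonal_one]

variable {T : Matrix N N ℝ} {ε : N → ℝ}

theorem trAbs_add_smul_diagonal_le (hT : T.IsHermitian) (hε : ∀ x, ε x * ε x = 1)
    (hTε : diagonal ε * T * diagonal ε = -T) {s : N → ℝ} (hs : ∀ x, s x * s x = 1) (u : ℝ) :
    trAbs (T + u • diagonal s) ≤ trAbs (T + u • diagonal ε) := by
  set E := diagonal ε
  set S := diagonal s
  have hEE : E * E = 1 := diagonal_mul_self_eq_one hε
  have hE : star E = E := (isHermitian_diagonal ε).isSelfAdjoint.star_eq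
  have hanti : T * E + E * T = 0 := by
    have : E * (E * T * E) = T * E := by rw [← mul_assoc, ← mul_assoc, hEE, one_mul]
    rw [hTε, mul_neg] at this
    rw [← this, neg_add_cancel]
  have hflip : star E * (T + u • S) * E = -T + u • S := by
    rw [hE, mul_add, add_mul, hTε, mul_smul_comm, smul_mul_assoc, diagonal_mul_diagonal,
      diagonal_mul_diagonal]
    congr 3
    funext x
    linear_combination s x * hε x
  have hsq : (T + u • S) * (T + u • S) + (-T + u • S) * (-T + u • S)
      = (2 : ℝ) • ((T + u • E) * (T + u • E)) := by
    have hSS : S * S = 1 := diagonal_mul_self_eq_one hs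
    rw [add_smul_mul_self _ _ hSS, add_smul_mul_self _ _ hSS, add_smul_mul_self _ _ hEE, hanti]
    simp only [neg_mul, mul_neg, neg_neg]
    module
  have hA : (T + u • S).IsHermitian := hT.add ((isHermitian_diagonal s).smul (.all u))
  have hB : (-T + u • S).IsHermitian := hT.neg.add ((isHermitian_diagonal s).smul (.all u))
  have hC : (T + u • E).IsHermitian := hT.add ((isHermitian_diagonal ε).smul (.all u))
  have := trAbs_add_trAbs_le hA hB hC hsq
  rw [← hflip, trAbs_star_mul_mul hA (by rw [hE, hEE])] at this
  linarith

theorem trAbs_add_smul_diagonal_neg (hT : T.IsHermitian) (hε : ∀ x, ε x * ε x = 1)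
    (hTε : diagonal ε * T * diagonal ε = -T) (u : ℝ) :
    trAbs (T + u • diagonal (-ε)) = trAbs (T + u • diagonal ε) := by
  set E := diagonal ε
  have hEE : E * E = 1 := diagonal_mul_self_eq_one hε
  have hE : star E = E := (isHermitian_diagonal ε).isSelfAdjoint.star_eq
  have hflip : T + u • diagonal (-ε) = -(star E * (T + u • E) * E) := by
    rw [hE, mul_add, add_mul, hTε, mul_smul_comm, smul_mul_assoc, hEE, one_mul,
      show diagonal (-ε) = -E from (diagonal_neg ε).symm, smul_neg, neg_add, neg_neg]
  rw [hflip, trAbs_neg, trAbs_star_mul_mul (hT.add ((isHermitian_diagonal ε).smul (.all u)))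
    (by rw [hE, hEE])]

end TraceNorm

section Configurations

variable {V : Type*} {r : ℕ}

lemma occ_sub_half_sq (b : Bool) : (occ b - 1 / 2) ^ 2 = 1 / 4 := by
  cases b <;> norm_num [occ]

lemma two_mul_occ_sub_one_mul_self (b : Bool) : (2 * occ b - 1) * (2 * occ b - 1) = 1 := by
  cases b <;> norm_num [occ]

lemma nsite_eq_card (C : V → Fin r → Bool) (x : V) :
    nsite C x = #{σ | C x σ = true} := by
  simp [nsite, occ, Finset.sum_boole]

lemma abs_nsite_sub_half_le (C : V → Fin r → Bool) (x : V) : |nsite C x - r / 2| ≤ r / 2 := by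
  have h : (#{σ | C x σ = true} : ℝ) ≤ r := by
    exact_mod_cast (card_filter_le univ _).trans_eq (card_fin r)
  rw [abs_le, nsite_eq_card]
  constructor <;> linarith [(#{σ | C x σ = true}).cast_nonneg (α := ℝ)]

lemma nsite_eq_iff_forall_true (C : V → Fin r → Bool) (x : V) :
    nsite C x = r ↔ ∀ σ, C x σ = true := by
  rw [nsite_eq_card, Nat.cast_inj]
  conv_lhs => rhs; rw [← Fintype.card_fin r, ← card_univ]
  rw [card_filter_eq_iff]
  simp

lemma nsite_eq_zero_iff_forall_false (C : V → Fin r → Bool) (x : V) :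
    nsite C x = 0 ↔ ∀ σ, C x σ = false := by
  rw [nsite_eq_card, Nat.cast_eq_zero, card_filter_eq_zero_iff]
  simp

lemma sum_filter_lt_occ_sub_half (g : Fin r → Bool) :
    ∑ p ∈ univ.filter (fun p : Fin r × Fin r => p.1 < p.2),
        (occ (g p.1) - 1 / 2) * (occ (g p.2) - 1 / 2)
      = ((∑ σ, occ (g σ) - r / 2) ^ 2 - r / 4) / 2 := by
  have h := two_mul_sum_filter_lt fun σ => occ (g σ) - 1 / 2
  simp only [occ_sub_half_sq, Finset.sum_sub_distrib, sum_const, card_univ, Fintype.card_fin,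
    nsmul_eq_mul] at h
  linear_combination h / 2

end Configurations

section RegularGraph

variable {V : Type*} [Fintype V] [DecidableEq V] (G : SimpleGraph V) [DecidableRel G.Adj]
  {z : ℕ}

omit [DecidableEq V] in
lemma sum_sq_le_card_mul_sq {u : V → ℝ} {a : ℝ} (hu : ∀ x, |u x| ≤ a) :
    ∑ x, u x ^ 2 ≤ Fintype.card V * a ^ 2 := by
  simpa using Finset.sum_le_card_nsmul univ (fun x => u x ^ 2) (a ^ 2)
    fun x _ => sq_le_sq.mpr ((hu x).trans (le_abs_self a))

lemma lapForm_nonneg (u : V → ℝ) : 0 ≤ toLinearMap₂' ℝ (G.lapMatrix ℝ) u u := by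
  rw [SimpleGraph.lapMatrix_toLinearMap₂']
  positivity

theorem le_mul_sum_sq_add_lapForm {c W a : ℝ} (hc : c ≤ 0) (hW : 0 ≤ W) {u : V → ℝ}
    (hu : ∀ x, |u x| ≤ a) :
    c * (Fintype.card V * a ^ 2)
      ≤ c * ∑ x, u x ^ 2 + W * toLinearMap₂' ℝ (G.lapMatrix ℝ) u u := by
  nlinarith [sum_sq_le_card_mul_sq hu, lapForm_nonneg G u]

theorem mul_sum_sq_add_lapForm_le_iff {c W a : ℝ} (hc : c < 0) (hW : 0 < W)
    (hconn : G.Connected) {u : V → ℝ} (hu : ∀ x, |u x| ≤ a) :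
    c * ∑ x, u x ^ 2 + W * toLinearMap₂' ℝ (G.lapMatrix ℝ) u u ≤ c * (Fintype.card V * a ^ 2)
      ↔ (∀ x, u x = a) ∨ (∀ x, u x = -a) := by
  have hconst_iff := SimpleGraph.lapMatrix_toLinearMap₂'_apply'_eq_zero_iff_forall_reachable G u
  constructor
  · intro h
    have hS := sum_sq_le_card_mul_sq hu
    have hQ := lapForm_nonneg G u
    have hQ0 : toLinearMap₂' ℝ (G.lapMatrix ℝ) u u = 0 := by nlinarith
    have hS' : ∑ x, u x ^ 2 = ∑ _x : V, a ^ 2 := by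
      rw [sum_const, card_univ, nsmul_eq_mul]
      nlinarith
    have hsq (x : V) : u x ^ 2 = a ^ 2 :=
      (Finset.sum_eq_sum_iff_of_le fun x _ => sq_le_sq.mpr ((hu x).trans (le_abs_self a))).mp
        hS' x (mem_univ x)
    obtain ⟨x₀⟩ := hconn.nonempty
    have hconst : ∀ x, u x = u x₀ := fun x => hconst_iff.mp hQ0 x x₀ (hconn.preconnected x x₀)
    rcases sq_eq_sq_iff_eq_or_eq_neg.mp (hsq x₀) with h₀ | h₀
    · exact .inl fun x => (hconst x).trans h₀
    · exact .inr fun x => (hconst x).trans h₀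
  · intro h
    have hsq : ∀ x, u x ^ 2 = a ^ 2 := by rcases h with h | h <;> simp [h]
    have hQ0 : toLinearMap₂' ℝ (G.lapMatrix ℝ) u u = 0 :=
      hconst_iff.mpr fun x y _ => by rcases h with h | h <;> rw [h x, h y]
    simp [hsq, hQ0]

lemma sum_adj_mul_eq (hreg : G.IsRegularOfDegree z) (u : V → ℝ) :
    ∑ x, ∑ y, (if G.Adj x y then u x * u y else 0)
      = z * ∑ x, u x ^ 2 - toLinearMap₂' ℝ (G.lapMatrix ℝ) u u := by
  rw [toLinearMap₂'_apply', SimpleGraph.lapMatrix, sub_mulVec, dotProduct_sub,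
    SimpleGraph.dotProduct_mulVec_degMatrix, SimpleGraph.dotProduct_mulVec_adjMatrix,
    Finset.mul_sum]
  simp only [hreg.degree_eq, sq, mul_assoc, sub_sub_cancel]

theorem H0_eq (hreg : G.IsRegularOfDegree z) {ε : V → ℝ} (hε : ∀ x, ε x * ε x = 1)
    (hadj : ∀ x y, G.Adj x y → ε x * ε y = -1) (r : ℕ) (I W : ℝ) (C : V → Fin r → Bool) :
    let u := fun x => ε x * (nsite C x - r / 2)
    H0 G r I W C = (I - z * W / 4) * ∑ x, u x ^ 2
      + W / 4 * toLinearMap₂' ℝ (G.lapMatrix ℝ) u u - I * r * Fintype.card V / 4 := by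
  intro u
  set m := fun x => nsite C x - r / 2
  have hu : ∀ x, u x ^ 2 = m x ^ 2 := fun x => by linear_combination m x ^ 2 * hε x
  have hsite : ∀ x, ∑ p ∈ univ.filter (fun p : Fin r × Fin r => p.1 < p.2),
      (occ (C x p.1) - 1 / 2) * (occ (C x p.2) - 1 / 2) = (u x ^ 2 - r / 4) / 2 := fun x => by
    rw [sum_filter_lt_occ_sub_half, hu]
    rfl
  have hedge : ∑ x, ∑ y, (if G.Adj x y then m x * m y else 0)
      = -∑ x, ∑ y, (if G.Adj x y then u x * u y else 0) := by
    simp only [← Finset.sum_neg_distrib]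
    refine Finset.sum_congr rfl fun x _ => Finset.sum_congr rfl fun y _ => ?_
    split_ifs with h
    · linear_combination (m x * m y) * hadj x y h
    · simp
  unfold H0
  rw [Finset.sum_congr rfl fun x _ => hsite x]
  change _ + W / 2 * ((∑ x, ∑ y, (if G.Adj x y then m x * m y else 0)) / 2) = _
  rw [hedge, sum_adj_mul_eq G hreg, ← Finset.sum_div, Finset.sum_sub_distrib, sum_const,
    card_univ, nsmul_eq_mul]
  ring

end RegularGraph

section Checkerboard

variable {V : Type*} [DecidableEq V] {r : ℕ}

def staggeredSign (s : Finset V) (x : V) : ℝ := if x ∈ s then 1 else -1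

lemma staggeredSign_mul_self (s : Finset V) (x : V) :
    staggeredSign s x * staggeredSign s x = 1 := by
  unfold staggeredSign; split_ifs <;> norm_num

lemma staggeredSign_compl [Fintype V] (s : Finset V) :
    staggeredSign sᶜ = -staggeredSign s := by
  funext x; by_cases hx : x ∈ s <;> simp [staggeredSign, hx]

lemma staggeredSign_mul_of_adj {G : SimpleGraph V} {s : Finset V}
    (hbip : ∀ x y, G.Adj x y → (x ∈ s ↔ y ∉ s)) (x y : V) (h : G.Adj x y) :
    staggeredSign s x * staggeredSign s y = -1 := by
  by_cases hy : y ∈ s <;> simp [staggeredSign, hy, (hbip x y h).mpr, mt (hbip x y h).mp]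

lemma ionMat_checkerboard (s : Finset V) (σ : Fin r) :
    ionMat (fun x _ => decide (x ∈ s)) σ = Matrix.diagonal (staggeredSign s) := by
  unfold ionMat; congr 1; funext x; by_cases hx : x ∈ s <;> norm_num [staggeredSign, occ, hx]

theorem staggeredSign_mul_nsite_sub_eq_iff (s : Finset V) (C : V → Fin r → Bool) :
    (∀ x, staggeredSign s x * (nsite C x - r / 2) = r / 2) ↔ C = fun x _ => decide (x ∈ s) := by
  rw [funext_iff]
  refine forall_congr' fun x => ?_
  rw [funext_iff]
  by_cases hx : x ∈ s
  · simp only [staggeredSign, hx, if_true, one_mul, decide_true, sub_eq_iff_eq_add, add_halves]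
    exact nsite_eq_iff_forall_true C x
  · simp only [staggeredSign, hx, if_false, decide_false, neg_one_mul, neg_sub,
      sub_eq_self]
    exact nsite_eq_zero_iff_forall_false C x

end Checkerboard

section Model

variable {V : Type*} [Fintype V] [DecidableEq V] (G : SimpleGraph V) [DecidableRel G.Adj]
  {s : Finset V} {z r : ℕ}

omit [Fintype V] [DecidableEq V] in
lemma hopMat_isHermitian (t : ℝ) : (hopMat G t).IsHermitian := by
  ext x y
  simp [hopMat, G.adj_comm]

lemma diagonal_staggeredSign_mul_hopMat_mul (hbip : ∀ x y, G.Adj x y → (x ∈ s ↔ y ∉ s))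
    (t : ℝ) :
    diagonal (staggeredSign s) * hopMat G t * diagonal (staggeredSign s) = -hopMat G t := by
  ext x y
  rw [mul_diagonal, diagonal_mul, neg_apply]
  by_cases h : G.Adj x y
  · simp only [hopMat, of_apply, if_pos h]
    linear_combination t * staggeredSign_mul_of_adj hbip x y h
  · simp [hopMat, h]

theorem trAbs_hopMat_add_ionMat_le (hbip : ∀ x y, G.Adj x y → (x ∈ s ↔ y ∉ s)) (t U : ℝ)
    (C : V → Fin r → Bool) (σ : Fin r) :
    trAbs (hopMat G t + U • ionMat C σ)
      ≤ trAbs (hopMat G t + U • ionMat (fun x _ => decide (x ∈ s)) σ) := by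
  rw [ionMat_checkerboard]
  exact trAbs_add_smul_diagonal_le (hopMat_isHermitian G t) (staggeredSign_mul_self s)
    (diagonal_staggeredSign_mul_hopMat_mul G hbip t)
    (fun x => two_mul_occ_sub_one_mul_self (C x σ)) U

theorem trAbs_hopMat_add_ionMat_compl (hbip : ∀ x y, G.Adj x y → (x ∈ s ↔ y ∉ s)) (t U : ℝ)
    (σ : Fin r) :
    trAbs (hopMat G t + U • ionMat (fun x _ => decide (x ∈ sᶜ)) σ)
      = trAbs (hopMat G t + U • ionMat (fun x _ => decide (x ∈ s)) σ) := by
  rw [ionMat_checkerboard, ionMat_checkerboard, staggeredSign_compl]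
  exact trAbs_add_smul_diagonal_neg (hopMat_isHermitian G t) (staggeredSign_mul_self s)
    (diagonal_staggeredSign_mul_hopMat_mul G hbip t) U

variable (V) in
noncomputable def classicalMinEnergy (z r : ℕ) (I W : ℝ) : ℝ :=
  (I - z * W / 4) * (Fintype.card V * (r / 2) ^ 2) - I * r * Fintype.card V / 4

omit [Fintype V] in
lemma abs_staggeredSign_mul_nsite_sub_le (C : V → Fin r → Bool) (x : V) :
    |staggeredSign s x * (nsite C x - r / 2)| ≤ r / 2 := by
  rw [abs_mul, show |staggeredSign s x| = 1 by unfold staggeredSign; split_ifs <;> norm_num,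
    one_mul]
  exact abs_nsite_sub_half_le C x

theorem classicalMinEnergy_le_H0 (hreg : G.IsRegularOfDegree z)
    (hbip : ∀ x y, G.Adj x y → (x ∈ s ↔ y ∉ s)) {I W : ℝ} (hW : 0 ≤ W) (hIW : 4 * I ≤ z * W)
    (C : V → Fin r → Bool) : classicalMinEnergy V z r I W ≤ H0 G r I W C := by
  rw [H0_eq G hreg (staggeredSign_mul_self s) (staggeredSign_mul_of_adj hbip),
    classicalMinEnergy]
  have := le_mul_sum_sq_add_lapForm G (c := I - z * W / 4) (W := W / 4) (by linarith)
    (by linarith) (abs_staggeredSign_mul_nsite_sub_le (s := s) C)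
  linarith

theorem H0_le_classicalMinEnergy_iff (hreg : G.IsRegularOfDegree z) (hconn : G.Connected)
    (hbip : ∀ x y, G.Adj x y → (x ∈ s ↔ y ∉ s)) {I W : ℝ} (hW : 0 < W) (hIW : 4 * I < z * W)
    (C : V → Fin r → Bool) :
    H0 G r I W C ≤ classicalMinEnergy V z r I W
      ↔ C = (fun x _ => decide (x ∈ s)) ∨ C = (fun x _ => decide (x ∈ sᶜ)) := by
  rw [H0_eq G hreg (staggeredSign_mul_self s) (staggeredSign_mul_of_adj hbip),
    classicalMinEnergy, sub_le_sub_iff_right,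
    mul_sum_sq_add_lapForm_le_iff G (by linarith) (by linarith) hconn
      (abs_staggeredSign_mul_nsite_sub_le C),
    ← staggeredSign_mul_nsite_sub_eq_iff, ← staggeredSign_mul_nsite_sub_eq_iff,
    staggeredSign_compl]
  simp only [Pi.neg_apply, neg_mul, neg_eq_iff_eq_neg]

end Model

end FalicovKimball

open FalicovKimball in
theorem statement11_general
    {V : Type*} [Fintype V] [DecidableEq V]
    (G : SimpleGraph V) [DecidableRel G.Adj]
    (z r : ℕ) (hr : 2 ≤ r)
    (hreg : G.IsRegularOfDegree z) (hconn : G.Connected)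
    (Λe Λo : Finset V)
    (hcover : ∀ v : V, v ∈ Λe ∨ v ∈ Λo) (hdisj : Disjoint Λe Λo)
    (hbip : ∀ x y : V, G.Adj x y → (x ∈ Λe ∧ y ∈ Λo) ∨ (x ∈ Λo ∧ y ∈ Λe))
    (t U I W : ℝ) (hW : 0 < W) (hIW : 4 * I < (z : ℝ) * W) :
    {C : V → Fin r → Bool |
        ∀ C' : V → Fin r → Bool, Efun G r t U I W C ≤ Efun G r t U I W C'} =
      {fun x _ => decide (x ∈ Λe), fun x _ => decide (x ∈ Λo)} ∧
    (fun (x : V) (_ : Fin r) => decide (x ∈ Λe)) ≠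
      (fun (x : V) (_ : Fin r) => decide (x ∈ Λo)) := by
  obtain rfl : Λo = Λeᶜ := Finset.ext fun x =>
    ⟨fun hxo => mem_compl.mpr fun hxe => disjoint_left.mp hdisj hxe hxo,
      fun hx => (hcover x).resolve_left (mem_compl.mp hx)⟩
  have hbip' : ∀ x y, G.Adj x y → (x ∈ Λe ↔ y ∉ Λe) := fun x y h => by
    have := hbip x y h
    simp only [mem_compl] at this
    tauto
  let f (C : V → Fin r → Bool) := -(1 / 2) * ∑ σ, trAbs (hopMat G t + U • ionMat C σ)
  refine ⟨setOf_forall_add_le_eq (f := f) (m := f fun x _ => decide (x ∈ Λe)) ⟨_, .inl rfl⟩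
    (fun C => ?_) ?_
    (classicalMinEnergy_le_H0 G hreg hbip' hW.le hIW.le)
    (H0_le_classicalMinEnergy_iff G hreg hconn hbip' hW hIW), ?_⟩
  · exact mul_le_mul_of_nonpos_left
      (Finset.sum_le_sum fun σ _ => trAbs_hopMat_add_ionMat_le G hbip' t U C σ) (by norm_num)
  · rintro C (rfl | rfl)
    · rfl
    · simp only [f, trAbs_hopMat_add_ionMat_compl G hbip']
  · obtain ⟨v⟩ := hconn.nonempty
    intro h
    have := congr_fun₂ h v ⟨0, by omega⟩
    by_cases hv : v ∈ Λe <;> simp [hv] at this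

/-- **Theorem 2(i), matrix form.** For `t ≠ 0`, `U ≠ 0`, `W > 0`,
`4I < zW`, the energy `E(C) = −(1/2) Σ_σ Tr √((T + U S_σ(C))²) + H_i^0(C)` attains its
minimum at exactly the two full checkerboard configurations. -/
theorem statement11
    {V : Type*} [Fintype V] [DecidableEq V]
    (G : SimpleGraph V) [DecidableRel G.Adj]
    (z r : ℕ) (hz : 2 ≤ z) (hr : 2 ≤ r)
    (hreg : G.IsRegularOfDegree z) (hconn : G.Connected)
    (Λe Λo : Finset V)
    (hcover : ∀ v : V, v ∈ Λe ∨ v ∈ Λo) (hdisj : Disjoint Λe Λo)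
    (hbip : ∀ x y : V, G.Adj x y → (x ∈ Λe ∧ y ∈ Λo) ∨ (x ∈ Λo ∧ y ∈ Λe))
    (t U I W : ℝ) (ht : t ≠ 0) (hU : U ≠ 0) (hW : 0 < W) (hIW : 4 * I < (z : ℝ) * W) :
    {C : V → Fin r → Bool |
        ∀ C' : V → Fin r → Bool, Efun G r t U I W C ≤ Efun G r t U I W C'} =
      {fun x _ => decide (x ∈ Λe), fun x _ => decide (x ∈ Λo)} ∧
    (fun (x : V) (_ : Fin r) => decide (x ∈ Λe)) ≠
      (fun (x : V) (_ : Fin r) => decide (x ∈ Λo)) :=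
  statement11_general G z r hr hreg hconn Λe Λo hcover hdisj hbip t U I W hW hIW
end

section
/- (Region A of the atomic-limit phase diagram) Let r = 2. Assume W > 0, 0 ≤ I < zW/4, and |μ| < zW/2 − I. Then H(C) = H_i^0(C) − μ·N_i(C) attains its minimum over all ion configurations at exactly two configurations: the configuration with n_{x,σ} = 1 for all x ∈ Λᵉ and σ ∈ {↑,↓} and n_{x,σ} = 0 on Λᵒ, and the configuration obtained by exchanging Λᵉ and Λᵒ. -/
open Finset

/-- Total ion number `N_i(C) = Σ_{x,σ} n_{x,σ}` (as a real number). -/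
noncomputable def Ni {V : Type*} {r : ℕ} [Fintype V] (C : V → Fin r → Bool) : ℝ :=
  ∑ x : V, ∑ σ : Fin r, occ (C x σ)

/-- Grand-canonical classical Hamiltonian `H(C) = H_i^0(C) − μ·N_i(C)` for two species. -/
noncomputable def Hgc {V : Type*} [Fintype V] (G : SimpleGraph V) [DecidableRel G.Adj]
    (I W μ : ℝ) (C : V → Fin 2 → Bool) : ℝ :=
  H0 G 2 I W C - μ * Ni C

/-!
Since `G` is `z`-regular, every site lies in `2 * z` ordered pairs of neighbours, so the site
terms of `H` can be shared out over them and `H` becomes a sum of one bond energy over all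
ordered pairs of neighbours. The Region A inequalities say precisely that this bond energy is
minimal exactly on a full site next to an empty one. Both checkerboards attain the minimum on
every bond, so the minimisers of `H` are the configurations that alternate between full and
empty along every edge, i.e. the proper `Bool`-colourings of `G`; a connected graph has only
two of those, the bipartition and its swap.
-/

namespace SimpleGraph

variable {V : Type*} {G : SimpleGraph V}

section Coloring

theorem Coloring.eq_or_eq_not_of_connected (hG : G.Connected) (c d : G.Coloring Bool) :
    (⇑c = ⇑d) ∨ (⇑c = fun x => !d x) := by
  obtain ⟨v⟩ := hG.nonempty
  have hcd : ∀ x, (c v = c x ↔ d v = d x) := fun x => by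
    obtain ⟨p⟩ := hG v x
    simpa [← Bool.eq_iff_iff] using
      (c.even_length_iff_congr p).symm.trans (d.even_length_iff_congr p)
  by_cases hv : c v = d v
  · exact .inl <| funext fun x =>
      (by decide : ∀ a b p q : Bool, (a = p ↔ b = q) → a = b → p = q) _ _ _ _ (hcd x) hv
  · exact .inr <| funext fun x =>
      (by decide : ∀ a b p q : Bool, (a = p ↔ b = q) → a ≠ b → p = !q) _ _ _ _ (hcd x) hv

variable {ι : Type*} {C : V → ι → Bool}

theorem forall_adj_alternating_iff [Nonempty ι] (hnb : ∀ x, ∃ y, G.Adj x y) :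
    (∀ x y, G.Adj x y → (C x = fun _ => true) ∧ (C y = fun _ => false) ∨
      (C x = fun _ => false) ∧ (C y = fun _ => true)) ↔
    ∃ d : G.Coloring Bool, C = fun x _ => d x := by
  refine ⟨fun hC => ?_, ?_⟩
  · obtain ⟨i⟩ := ‹Nonempty ι›
    refine ⟨Coloring.mk (fun x => C x i) fun {x y} hxy => ?_, funext fun x => ?_⟩
    · rcases hC x y hxy with ⟨hx, hy⟩ | ⟨hx, hy⟩ <;> simp [hx, hy]
    · show C x = fun _ => C x i
      obtain ⟨y, hxy⟩ := hnb x
      rcases hC x y hxy with ⟨hx, -⟩ | ⟨hx, -⟩ <;> rw [hx]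
  · rintro ⟨d, rfl⟩ x y hxy
    have := d.valid hxy
    cases hx : d x <;> cases hy : d y <;> simp_all

theorem Connected.exists_coloring_eq_iff (hG : G.Connected) (c : G.Coloring Bool) :
    (∃ d : G.Coloring Bool, C = fun x _ => d x) ↔
      C = (fun x _ => c x) ∨ C = fun x _ => !c x := by
  refine ⟨?_, ?_⟩
  · rintro ⟨d, rfl⟩
    rcases Coloring.eq_or_eq_not_of_connected hG d c with h | h <;> rw [h]
    exacts [.inl rfl, .inr rfl]
  · rintro (rfl | rfl)
    exacts [⟨c, rfl⟩, ⟨G.recolorOfEquiv Equiv.boolNot c, rfl⟩]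

end Coloring

section BondSum

variable [Fintype V] [DecidableRel G.Adj] {α : Type*}

noncomputable def bondSum (G : SimpleGraph V) [DecidableRel G.Adj]
    (b : α → α → ℝ) (C : V → α) : ℝ :=
  ∑ x, ∑ y ∈ G.neighborFinset x, b (C x) (C y)

theorem sum_sum_neighborFinset_left {z : ℕ} (hreg : G.IsRegularOfDegree z) (f : V → ℝ) :
    ∑ x, ∑ _y ∈ G.neighborFinset x, f x = z * ∑ x, f x := by
  simp only [sum_const, card_neighborFinset_eq_degree, hreg.degree_eq, nsmul_eq_mul, mul_sum]

theorem sum_sum_neighborFinset_right {z : ℕ} (hreg : G.IsRegularOfDegree z) (f : V → ℝ) :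
    ∑ x, ∑ y ∈ G.neighborFinset x, f y = z * ∑ x, f x := by
  rw [← sum_sum_neighborFinset_left hreg,
    Finset.sum_comm' (t' := univ) (s' := fun y => G.neighborFinset y)]
  simp [adj_comm]

theorem bondSum_eq_sum_const_iff {b : α → α → ℝ} {m : ℝ} (hb : ∀ u v, m ≤ b u v)
    (C : V → α) :
    G.bondSum b C = ∑ x, ∑ _y ∈ G.neighborFinset x, m ↔
      ∀ x y, G.Adj x y → b (C x) (C y) = m := by
  rw [eq_comm, bondSum, Finset.sum_eq_sum_iff_of_le fun x _ => sum_le_sum fun y _ => hb _ _]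
  simp only [mem_univ, true_implies]
  refine forall_congr' fun x => ?_
  rw [Finset.sum_eq_sum_iff_of_le fun y _ => hb _ _]
  simp [eq_comm]

theorem forall_bondSum_le_iff {b : α → α → ℝ} {m : ℝ} (hb : ∀ u v, m ≤ b u v)
    {C₀ : V → α} (hC₀ : ∀ x y, G.Adj x y → b (C₀ x) (C₀ y) = m) (C : V → α) :
    (∀ C', G.bondSum b C ≤ G.bondSum b C') ↔ ∀ x y, G.Adj x y → b (C x) (C y) = m := by
  have hlow : ∀ C', ∑ x, ∑ _y ∈ G.neighborFinset x, m ≤ G.bondSum b C' := fun C' =>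
    sum_le_sum fun x _ => sum_le_sum fun y _ => hb _ _
  rw [← bondSum_eq_sum_const_iff hb]
  refine ⟨fun h => le_antisymm ?_ (hlow C), fun h C' => h ▸ hlow C'⟩
  exact (h C₀).trans ((bondSum_eq_sum_const_iff hb C₀).2 hC₀).le

end BondSum

end SimpleGraph

noncomputable def charge (u : Fin 2 → Bool) : ℝ := occ (u 0) + occ (u 1)

noncomputable def siteEnergy (I μ : ℝ) (u : Fin 2 → Bool) : ℝ :=
  2 * I * ((occ (u 0) - 1 / 2) * (occ (u 1) - 1 / 2)) - μ * charge u

noncomputable def bondEnergy (z I W μ : ℝ) (u v : Fin 2 → Bool) : ℝ :=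
  (siteEnergy I μ u + siteEnergy I μ v) / (2 * z) + W / 4 * (charge u - 1) * (charge v - 1)

lemma bondEnergy_comm (z I W μ : ℝ) (u v : Fin 2 → Bool) :
    bondEnergy z I W μ u v = bondEnergy z I W μ v u := by
  unfold bondEnergy; ring

/- After scaling by `2 * z`, the excess over the checkerboard bond is `z * W ∓ 2 * μ` for two
full or two empty sites, `z * W / 2 - 2 * I` for two half-filled ones and `z * W / 2 - I ∓ μ`
for a half-filled site next to a full or an empty one. -/
lemma bondEnergy_full_empty_lt {z I W μ : ℝ} (hz : 0 < z) (hI : 0 ≤ I) (hIW : I < z * W / 4)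
    (hμ : |μ| < z * W / 2 - I) {u v : Fin 2 → Bool}
    (huv : ¬((u = fun _ => true) ∧ (v = fun _ => false) ∨
      (u = fun _ => false) ∧ (v = fun _ => true))) :
    bondEnergy z I W μ (fun _ => true) (fun _ => false) < bondEnergy z I W μ u v := by
  obtain ⟨hμ₁, hμ₂⟩ := abs_lt.mp hμ
  have h2z : 0 < 2 * z := by positivity
  refine lt_of_mul_lt_mul_left ?_ h2z.le
  have hscale : ∀ u v, 2 * z * bondEnergy z I W μ u v =
      siteEnergy I μ u + siteEnergy I μ v + z * W / 2 * (charge u - 1) * (charge v - 1) := by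
    intro u v; unfold bondEnergy; field_simp; ring
  rw [hscale, hscale]
  obtain ⟨a, b, rfl⟩ : ∃ a b, u = ![a, b] := ⟨u 0, u 1, by ext i; fin_cases i <;> rfl⟩
  obtain ⟨c, d, rfl⟩ : ∃ c d, v = ![c, d] := ⟨v 0, v 1, by ext i; fin_cases i <;> rfl⟩
  cases a <;> cases b <;> cases c <;> cases d <;>
    first
    | exact absurd (by decide) huv
    | (simp only [siteEnergy, charge, occ]; norm_num; linarith)

lemma bondEnergy_full_empty_le {z I W μ : ℝ} (hz : 0 < z) (hI : 0 ≤ I) (hIW : I < z * W / 4)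
    (hμ : |μ| < z * W / 2 - I) (u v : Fin 2 → Bool) :
    bondEnergy z I W μ (fun _ => true) (fun _ => false) ≤ bondEnergy z I W μ u v := by
  by_cases huv : (u = fun _ => true) ∧ (v = fun _ => false) ∨
      (u = fun _ => false) ∧ (v = fun _ => true)
  · rcases huv with ⟨rfl, rfl⟩ | ⟨rfl, rfl⟩
    exacts [le_rfl, (bondEnergy_comm ..).le]
  · exact (bondEnergy_full_empty_lt hz hI hIW hμ huv).le

lemma bondEnergy_eq_full_empty_iff {z I W μ : ℝ} (hz : 0 < z) (hI : 0 ≤ I)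
    (hIW : I < z * W / 4) (hμ : |μ| < z * W / 2 - I) (u v : Fin 2 → Bool) :
    bondEnergy z I W μ u v = bondEnergy z I W μ (fun _ => true) (fun _ => false) ↔
      (u = fun _ => true) ∧ (v = fun _ => false) ∨
        (u = fun _ => false) ∧ (v = fun _ => true) := by
  refine ⟨fun h => by_contra fun huv => (bondEnergy_full_empty_lt hz hI hIW hμ huv).ne' h, ?_⟩
  rintro (⟨rfl, rfl⟩ | ⟨rfl, rfl⟩)
  exacts [rfl, bondEnergy_comm ..]

section Hamiltonian

variable {V : Type*} [Fintype V] {G : SimpleGraph V} [DecidableRel G.Adj]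

open SimpleGraph

theorem Hgc_eq_sum_siteEnergy_add (I W μ : ℝ) (C : V → Fin 2 → Bool) :
    Hgc G I W μ C = ∑ x, siteEnergy I μ (C x) +
      W / 4 * ∑ x, ∑ y ∈ G.neighborFinset x, (charge (C x) - 1) * (charge (C y) - 1) := by
  have hpairs : univ.filter (fun p : Fin 2 × Fin 2 => p.1 < p.2) = {(0, 1)} := by decide
  have hnsite : ∀ x, nsite C x = charge (C x) := fun x => Fin.sum_univ_two _
  simp only [Hgc, H0, Ni, siteEnergy, hpairs, sum_singleton, ← sum_filter,
    ← neighborFinset_eq_filter, hnsite, Fin.sum_univ_two, charge, sum_sub_distrib, ← mul_sum]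
  norm_num
  ring

theorem Hgc_eq_bondSum {z : ℕ} (hz : 0 < z) (hreg : G.IsRegularOfDegree z) (I W μ : ℝ)
    (C : V → Fin 2 → Bool) :
    Hgc G I W μ C = G.bondSum (bondEnergy z I W μ) C := by
  have hz' : (z : ℝ) ≠ 0 := by positivity
  simp only [Hgc_eq_sum_siteEnergy_add, bondSum, bondEnergy, sum_add_distrib, ← sum_div,
    sum_sum_neighborFinset_left hreg, sum_sum_neighborFinset_right hreg, mul_assoc, ← mul_sum]
  field_simp
  ring

end Hamiltonian

theorem statement15_general
    {V : Type*} [Fintype V] [DecidableEq V]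
    (G : SimpleGraph V) [DecidableRel G.Adj]
    (z : ℕ) (hz : 2 ≤ z)
    (hreg : G.IsRegularOfDegree z) (hconn : G.Connected)
    (Λe Λo : Finset V)
    (hcover : ∀ v : V, v ∈ Λe ∨ v ∈ Λo) (hdisj : Disjoint Λe Λo)
    (hbip : ∀ x y : V, G.Adj x y → (x ∈ Λe ∧ y ∈ Λo) ∨ (x ∈ Λo ∧ y ∈ Λe))
    (I W μ : ℝ) (hI0 : 0 ≤ I) (hIW : I < (z : ℝ) * W / 4)
    (hmu : |μ| < (z : ℝ) * W / 2 - I) :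
    {C : V → Fin 2 → Bool | ∀ C' : V → Fin 2 → Bool, Hgc G I W μ C ≤ Hgc G I W μ C'} =
      {fun x _ => decide (x ∈ Λe), fun x _ => decide (x ∈ Λo)} ∧
    (fun (x : V) (_ : Fin 2) => decide (x ∈ Λe)) ≠
      (fun (x : V) (_ : Fin 2) => decide (x ∈ Λo)) := by
  have hz0 : 0 < z := by omega
  have hzR : (0 : ℝ) < z := by exact_mod_cast hz0
  have hnb : ∀ x, ∃ y, G.Adj x y := fun x =>
    (G.degree_pos_iff_exists_adj x).1 (hreg.degree_eq x ▸ hz0)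
  have hΛo : ∀ x, x ∈ Λo ↔ x ∉ Λe :=
    fun x => ⟨fun ho he => disjoint_left.1 hdisj he ho, (hcover x).resolve_left⟩
  let parity : G.Coloring Bool := .mk (fun x => decide (x ∈ Λe)) fun {x y} hxy => by
    rcases hbip x y hxy with ⟨hx, hy⟩ | ⟨hx, hy⟩ <;> simp_all
  have hbond := bondEnergy_eq_full_empty_iff hzR hI0 hIW hmu
  have hparity_min : ∀ x y, G.Adj x y →
      bondEnergy z I W μ (fun _ => parity x) (fun _ => parity y) =
        bondEnergy z I W μ (fun _ => true) (fun _ => false) := by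
    simpa only [← hbond] using
      (G.forall_adj_alternating_iff (C := fun x (_ : Fin 2) => parity x) hnb).2 ⟨parity, rfl⟩
  have hmin : ∀ C, (∀ C', Hgc G I W μ C ≤ Hgc G I W μ C') ↔
      ∃ d : G.Coloring Bool, C = fun x _ => d x := fun C => by
    simp only [Hgc_eq_bondSum hz0 hreg, hbond, G.forall_adj_alternating_iff hnb,
      G.forall_bondSum_le_iff (bondEnergy_full_empty_le hzR hI0 hIW hmu) hparity_min]
  have hfill_o : (fun x (_ : Fin 2) => decide (x ∈ Λo)) = fun x _ => !parity x := by
    funext x _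
    show decide (x ∈ Λo) = !decide (x ∈ Λe)
    simp [hΛo]
  refine ⟨Set.ext fun C => ?_, fun h => ?_⟩
  · rw [Set.mem_ofPred_eq, hmin, hconn.exists_coloring_eq_iff parity, hfill_o]
    rfl
  · obtain ⟨v⟩ := hconn.nonempty
    have := congrFun (congrFun h v) 0
    by_cases hv : v ∈ Λe <;> simp_all

/-- **Region A.** For `W > 0`, `0 ≤ I < zW/4` and `|μ| < zW/2 − I`, the
minimizers of `H(C) = H_i^0(C) − μ·N_i(C)` are exactly the two full checkerboard
configurations. -/
theorem statement15
    {V : Type*} [Fintype V] [DecidableEq V]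
    (G : SimpleGraph V) [DecidableRel G.Adj]
    (z : ℕ) (hz : 2 ≤ z)
    (hreg : G.IsRegularOfDegree z) (hconn : G.Connected)
    (Λe Λo : Finset V)
    (hcover : ∀ v : V, v ∈ Λe ∨ v ∈ Λo) (hdisj : Disjoint Λe Λo)
    (hbip : ∀ x y : V, G.Adj x y → (x ∈ Λe ∧ y ∈ Λo) ∨ (x ∈ Λo ∧ y ∈ Λe))
    (I W μ : ℝ) (hW : 0 < W) (hI0 : 0 ≤ I) (hIW : I < (z : ℝ) * W / 4)
    (hmu : |μ| < (z : ℝ) * W / 2 - I) :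
    {C : V → Fin 2 → Bool | ∀ C' : V → Fin 2 → Bool, Hgc G I W μ C ≤ Hgc G I W μ C'} =
      {fun x _ => decide (x ∈ Λe), fun x _ => decide (x ∈ Λo)} ∧
    (fun (x : V) (_ : Fin 2) => decide (x ∈ Λe)) ≠
      (fun (x : V) (_ : Fin 2) => decide (x ∈ Λo)) :=
  statement15_general G z hz hreg hconn Λe Λo hcover hdisj hbip I W μ hI0 hIW hmu
end

section
/- (Region D₊ of the atomic-limit phase diagram) Let r = 2. Assume W > 0, I ≥ 0, and μ > zW/2 + I. Then H(C) = H_i^0(C) − μ·N_i(C) attains its minimum over all ion configurations at exactly one configuration: the fully occupied configuration with n_{x,σ} = 1 for all x ∈ Λ and σ ∈ {↑,↓}. -/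
/-!
Measure a configuration by its holes `d_x = 2 - n_x`. Since `n_x - 1 = 1 - d_x`, expanding both
terms of `H_i^0` around the full configuration and using `z`-regularity to count the linear edge
terms gives the exact identity
`H(C) = H(full) + (μ - I - zW/2) Σ_x d_x + 2I · #{x : d_x = 2} + (W/2) Σ_⟨x,y⟩ d_x d_y`.
For `W, I ≥ 0` and `μ > zW/2 + I` every correction is nonnegative and the first one vanishes only
when there are no holes.
-/

open Finset

namespace SimpleGraph

variable {V : Type*} [Fintype V] (G : SimpleGraph V) [DecidableRel G.Adj] {z : ℕ}
  {M : Type*} [AddCommMonoid M]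

theorem IsRegularOfDegree.sum_sum_adj_left (hreg : G.IsRegularOfDegree z) (f : V → M) :
    ∑ x, ∑ y, (if G.Adj x y then f x else 0) = z • ∑ x, f x := by
  rw [smul_sum]
  refine sum_congr rfl fun x _ => ?_
  rw [← sum_filter, ← neighborFinset_eq_filter, sum_const, card_neighborFinset_eq_degree,
    hreg x]

theorem IsRegularOfDegree.sum_sum_adj_right (hreg : G.IsRegularOfDegree z) (f : V → M) :
    ∑ x, ∑ y, (if G.Adj x y then f y else 0) = z • ∑ x, f x := by
  rw [sum_comm, ← hreg.sum_sum_adj_left G f]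
  simp only [G.adj_comm]

end SimpleGraph

section TwoSpecies

variable {V : Type*}

noncomputable def holes (C : V → Fin 2 → Bool) (x : V) : ℝ := 2 - nsite C x

theorem holes_eq (C : V → Fin 2 → Bool) (x : V) :
    holes C x = (1 - occ (C x 0)) + (1 - occ (C x 1)) := by
  simp only [holes, nsite, Fin.sum_univ_two]
  ring

theorem one_sub_occ_nonneg (b : Bool) : 0 ≤ 1 - occ b := by
  cases b <;> norm_num [occ]

theorem holes_nonneg (C : V → Fin 2 → Bool) (x : V) : 0 ≤ holes C x := by
  rw [holes_eq]
  exact add_nonneg (one_sub_occ_nonneg _) (one_sub_occ_nonneg _)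

theorem holes_pos {C : V → Fin 2 → Bool} {x : V} {σ : Fin 2} (h : C x σ = false) :
    0 < holes C x := by
  have hσ : 1 - occ (C x σ) = 1 := by simp [h, occ]
  obtain rfl | rfl : σ = 0 ∨ σ = 1 := by omega
  · linarith [holes_eq C x, one_sub_occ_nonneg (C x 1)]
  · linarith [holes_eq C x, one_sub_occ_nonneg (C x 0)]

theorem H0_two_eq [Fintype V] (G : SimpleGraph V) [DecidableRel G.Adj] (I W : ℝ)
    (C : V → Fin 2 → Bool) :
    H0 G 2 I W C = 2 * I * ∑ x, (occ (C x 0) - 1 / 2) * (occ (C x 1) - 1 / 2)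
      + W / 4 * ∑ x, ∑ y, (if G.Adj x y then (nsite C x - 1) * (nsite C y - 1) else 0) := by
  have hpairs : univ.filter (fun p : Fin 2 × Fin 2 => p.1 < p.2) = {(0, 1)} := by decide
  simp only [H0, hpairs, sum_singleton]
  norm_num
  ring

theorem Hgc_eq [Fintype V] {G : SimpleGraph V} [DecidableRel G.Adj] {z : ℕ}
    (hreg : G.IsRegularOfDegree z) (I W μ : ℝ) (C : V → Fin 2 → Bool) :
    Hgc G I W μ C = (I / 2 + z * W / 4 - 2 * μ) * Fintype.card V
      + (μ - I - z * W / 2) * ∑ x, holes C x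
      + 2 * I * ∑ x, (1 - occ (C x 0)) * (1 - occ (C x 1))
      + W / 4 * ∑ x, ∑ y, (if G.Adj x y then holes C x * holes C y else 0) := by
  have hsite : ∀ x, (occ (C x 0) - 1 / 2) * (occ (C x 1) - 1 / 2)
      = 1 / 4 - holes C x / 2 + (1 - occ (C x 0)) * (1 - occ (C x 1)) := fun x => by
    rw [holes_eq]; ring
  have hbond : ∀ x y, (if G.Adj x y then (nsite C x - 1) * (nsite C y - 1) else 0)
      = (if G.Adj x y then 1 else 0) - (if G.Adj x y then holes C x else 0)
        - (if G.Adj x y then holes C y else 0)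
        + (if G.Adj x y then holes C x * holes C y else 0) := fun x y => by
    unfold holes; split_ifs <;> ring
  have hNi : Ni C = ∑ x, (2 - holes C x) := by simp only [Ni, holes, nsite, sub_sub_cancel]
  simp only [Hgc, H0_two_eq, hsite, hbond, hNi, sum_add_distrib, sum_sub_distrib,
    hreg.sum_sum_adj_left, hreg.sum_sum_adj_right, sum_const, card_univ, nsmul_eq_mul, ← sum_div]
  ring

theorem Hgc_full_lt [Fintype V] {G : SimpleGraph V} [DecidableRel G.Adj] {z : ℕ}
    (hreg : G.IsRegularOfDegree z) {I W μ : ℝ} (hW : 0 ≤ W) (hI : 0 ≤ I)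
    (hμ : (z : ℝ) * W / 2 + I < μ) {C : V → Fin 2 → Bool} (hC : C ≠ fun _ _ => true) :
    Hgc G I W μ (fun _ _ => true) < Hgc G I W μ C := by
  obtain ⟨x, σ, hxσ⟩ : ∃ x σ, C x σ = false := by
    by_contra! hfull
    exact hC (funext₂ fun x σ => by simpa using hfull x σ)
  have hholes : 0 < ∑ x, holes C x :=
    sum_pos' (fun y _ => holes_nonneg C y) ⟨x, mem_univ x, holes_pos hxσ⟩
  have hempty : 0 ≤ ∑ x, (1 - occ (C x 0)) * (1 - occ (C x 1)) :=
    sum_nonneg fun x _ => mul_nonneg (one_sub_occ_nonneg _) (one_sub_occ_nonneg _)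
  have hbonds : 0 ≤ ∑ x, ∑ y, (if G.Adj x y then holes C x * holes C y else 0) :=
    sum_nonneg fun x _ => sum_nonneg fun y _ => by
      split_ifs
      exacts [mul_nonneg (holes_nonneg C x) (holes_nonneg C y), le_rfl]
  have hfull : holes (fun _ _ => true : V → Fin 2 → Bool) = 0 := by
    funext x; simp [holes_eq, occ]
  have hocc : occ true = 1 := if_pos rfl
  rw [Hgc_eq hreg, Hgc_eq hreg, hfull]
  simp only [Pi.zero_apply, hocc, sub_self, mul_zero, ite_self, sum_const_zero, add_zero]
  nlinarith [mul_pos (sub_pos.mpr hμ) hholes]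

end TwoSpecies

theorem statement18_general
    {V : Type*} [Fintype V]
    (G : SimpleGraph V) [DecidableRel G.Adj]
    (z : ℕ)
    (hreg : G.IsRegularOfDegree z)
    (I W μ : ℝ) (hW : 0 < W) (hI : 0 ≤ I) (hmu : (z : ℝ) * W / 2 + I < μ) :
    {C : V → Fin 2 → Bool | ∀ C' : V → Fin 2 → Bool, Hgc G I W μ C ≤ Hgc G I W μ C'} =
      {fun _ _ => true} := by
  ext C
  simp only [Set.mem_ofPred_eq, Set.mem_singleton_iff]
  constructor
  · intro hmin
    by_contra hC
    exact (hmin _).not_gt (Hgc_full_lt hreg hW.le hI hmu hC)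
  · rintro rfl C'
    rcases eq_or_ne C' (fun _ _ => true) with rfl | hC'
    · exact le_rfl
    · exact (Hgc_full_lt hreg hW.le hI hmu hC').le

/-- **Region D₊.** For `W > 0`, `I ≥ 0` and `μ > zW/2 + I`, the unique
minimizer of `H(C) = H_i^0(C) − μ·N_i(C)` is the fully occupied configuration. -/
theorem statement18
    {V : Type*} [Fintype V] [DecidableEq V]
    (G : SimpleGraph V) [DecidableRel G.Adj]
    (z : ℕ) (hz : 2 ≤ z)
    (hreg : G.IsRegularOfDegree z) (hconn : G.Connected)
    (Λe Λo : Finset V)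
    (hcover : ∀ v : V, v ∈ Λe ∨ v ∈ Λo) (hdisj : Disjoint Λe Λo)
    (hbip : ∀ x y : V, G.Adj x y → (x ∈ Λe ∧ y ∈ Λo) ∨ (x ∈ Λo ∧ y ∈ Λe))
    (I W μ : ℝ) (hW : 0 < W) (hI : 0 ≤ I) (hmu : (z : ℝ) * W / 2 + I < μ) :
    {C : V → Fin 2 → Bool | ∀ C' : V → Fin 2 → Bool, Hgc G I W μ C ≤ Hgc G I W μ C'} =
      {fun _ _ => true} :=
  statement18_general G z hreg I W μ hW hI hmu
end
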